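/- arXiv:2507.09655 — 2 statements merged into one kernel-verified Lean document; each statement's English description precedes it below -/
import Mathlib

section
/- Let k, f be odd positive integers and ξ, m ∈ ℤ. For each prime ℓ dividing k·f, write k_{(ℓ)} = ℓ^{v_ℓ(k)}, f_{(ℓ)} = ℓ^{v_ℓ(f)}, N_ℓ = (k f²)·ℓ^{−v_ℓ(kf²)}, and choose c_ℓ ∈ ℤ with c_ℓ·N_ℓ ≡ 1 (mod ℓ^{v_ℓ(kf²)}). Then Kl_{k,f}(ξ, m) = ∏_{ℓ ∣ kf} Kl^{(ℓ)}_{k_{(ℓ)}, f_{(ℓ)}}(c_ℓ·ξ, m), the product running over the distinct primes ℓ dividing kf. -/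
/-! The summand of `Kl k f ξ m` at `a` depends only on `a mod kf²` and is the product over
`ℓ ∣ kf` of the local summands at `a`: the condition `f² ∣ a² - 4m` holds iff
`f_(ℓ)² ∣ a² - 4m` for every `ℓ`; the Jacobi symbol is multiplicative in its lower argument,
and `(a² - 4m)/f_(ℓ)²` differs from `(a² - 4m)/f²` by a square prime to `ℓ`; and the
congruences on `c` say `∑ c_ℓ·N_ℓ ≡ 1 (mod kf²)`, i.e. `1/(kf²) ≡ ∑ c_ℓ/ℓ^{v_ℓ(kf²)} (mod 1)`,
which splits the exponential. By the Chinese remainder theorem, a sum over `a mod kf²` of a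
product of functions of `a mod ℓ^{v_ℓ(kf²)}` is the product of the local sums. -/

open scoped Classical

/-- The generalized Kloosterman sum `Kl_{k,f}(ξ, m)`: the sum over residues
`a mod k·f²` with `a² ≡ 4m (mod f²)` of the Jacobi symbol
`((a²-4m)/f² | k)` times `e^{2πi·aξ/(kf²)}`. -/
noncomputable def Kl (k f : ℕ) (ξ m : ℤ) : ℂ :=
  ∑ a ∈ Finset.range (k * f ^ 2),
    if ((f : ℤ) ^ 2) ∣ ((a : ℤ) ^ 2 - 4 * m) then
      (jacobiSym (((a : ℤ) ^ 2 - 4 * m) / (f : ℤ) ^ 2) k : ℂ) *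
        Complex.exp (2 * Real.pi * Complex.I * (a : ℂ) * (ξ : ℂ) / ((k : ℂ) * (f : ℂ) ^ 2))
    else 0

open Finset Function Complex Real

theorem Nat.sum_range_mul_eq_mul_sum_range {R : Type*} [CommSemiring R] {M N : ℕ}
    (hMN : M.Coprime N) {g h : ℕ → R} (hg : Periodic g M) (hh : Periodic h N) :
    ∑ a ∈ range (M * N), g a * h a = (∑ a ∈ range M, g a) * ∑ b ∈ range N, h b := by
  rcases Nat.eq_zero_or_pos M with rfl | hM
  · simp
  rcases Nat.eq_zero_or_pos N with rfl | hN
  · simp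
  rw [sum_mul_sum, ← sum_product']
  refine sum_nbij' (fun a => (a % M, a % N)) (fun x => Nat.chineseRemainder hMN x.1 x.2)
    ?_ ?_ ?_ ?_ ?_
  · intro a _
    simp [Nat.mod_lt _ hM, Nat.mod_lt _ hN]
  · intro x _
    simpa using Nat.chineseRemainder_lt_mul hMN _ _ hM.ne' hN.ne'
  · intro a ha
    have hcr := (Nat.chineseRemainder hMN (a % M) (a % N)).2
    have hmod : Nat.chineseRemainder hMN (a % M) (a % N) ≡ a [MOD M * N] :=
      (Nat.modEq_and_modEq_iff_modEq_mul hMN).1 ⟨hcr.1.trans (Nat.mod_modEq a M),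
        hcr.2.trans (Nat.mod_modEq a N)⟩
    exact Nat.ModEq.eq_of_lt_of_lt hmod
      (Nat.chineseRemainder_lt_mul hMN _ _ hM.ne' hN.ne') (mem_range.1 ha)
  · rintro ⟨x, y⟩ hxy
    rw [mem_product, mem_range, mem_range] at hxy
    have hcr := (Nat.chineseRemainder hMN x y).2
    simp only [Prod.mk.injEq]
    exact ⟨Eq.trans hcr.1 (Nat.mod_eq_of_lt hxy.1), Eq.trans hcr.2 (Nat.mod_eq_of_lt hxy.2)⟩
  · intro a _
    rw [hg.map_mod_nat, hh.map_mod_nat]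

theorem Finset.sum_range_prod_eq_prod_sum_range {R ι : Type*} [CommSemiring R]
    {s : Finset ι} {q : ι → ℕ} (hq : (s : Set ι).Pairwise (Nat.Coprime on q))
    {g : ι → ℕ → R} (hg : ∀ i ∈ s, Periodic (g i) (q i)) :
    ∑ a ∈ range (∏ i ∈ s, q i), ∏ i ∈ s, g i a = ∏ i ∈ s, ∑ a ∈ range (q i), g i a := by
  induction s using Finset.induction_on with
  | empty => simp
  | insert j s hj ih =>
    rw [coe_insert, Set.pairwise_insert_of_symm] at hq
    have hgs : Periodic (fun a => ∏ i ∈ s, g i a) (∏ i ∈ s, q i) := fun a => by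
      refine prod_congr rfl fun i hi => ?_
      obtain ⟨d, hd⟩ := dvd_prod_of_mem q hi
      rw [hd, mul_comm]
      exact (hg i (mem_insert_of_mem hi)).nat_mul d a
    simp only [prod_insert hj]
    rw [Nat.sum_range_mul_eq_mul_sum_range
      (Nat.Coprime.prod_right fun i hi => hq.2 i hi (ne_of_mem_of_not_mem hi hj).symm)
      (hg j (mem_insert_self j s)) hgs,
      ih hq.1 fun i hi => hg i (mem_insert_of_mem hi)]

theorem Int.sum_mul_ediv_modEq_one {ι : Type*} {s : Finset ι} {q c : ι → ℤ}
    (hq : (s : Set ι).Pairwise (IsCoprime on q))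
    (hc : ∀ i ∈ s, c i * ((∏ j ∈ s, q j) / q i) ≡ 1 [ZMOD q i]) :
    ∑ i ∈ s, c i * ((∏ j ∈ s, q j) / q i) ≡ 1 [ZMOD ∏ j ∈ s, q j] := by
  have hcofactor : ∀ i ∈ s, (∏ j ∈ s, q j) / q i = ∏ j ∈ s.erase i, q j := fun i hi => by
    -- `hc` fails for `q i = 0`, where `(∏ j ∈ s, q j) / 0 = 0`
    have hqi : q i ≠ 0 := fun h0 => by simpa [h0] using hc i hi
    rw [← mul_prod_erase s q hi, Int.mul_ediv_cancel_left _ hqi]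
  refine ((Int.modEq_iff_dvd.2 (prod_dvd_of_coprime hq fun i hi => ?_))).symm
  rw [← add_sum_erase s _ hi, add_sub_right_comm]
  refine dvd_add (hc i hi).symm.dvd (dvd_sum fun j hj => ?_)
  rw [hcofactor j (mem_of_mem_erase hj)]
  exact dvd_mul_of_dvd_right
    (dvd_prod_of_mem q (mem_erase.2 ⟨(ne_of_mem_erase hj).symm, hi⟩))

theorem Complex.exp_two_pi_I_mul_div_congr {n x y : ℤ} (h : x ≡ y [ZMOD n]) :
    exp (2 * π * I * x / n) = exp (2 * π * I * y / n) := by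
  rcases eq_or_ne n 0 with rfl | hn
  · rw [Int.modEq_zero_iff.1 h]
  obtain ⟨t, ht⟩ := Int.modEq_iff_dvd.1 h
  rw [show y = x + n * t by linarith]
  push_cast
  rw [mul_add, add_div, mul_div_assoc _ ((n : ℂ) * t),
    mul_div_cancel_left₀ _ (by exact_mod_cast hn), exp_add, mul_comm _ (t : ℂ), exp_int_mul_two_pi_mul_I, mul_one]

theorem Complex.exp_two_pi_I_mul_div_prod {ι : Type*} {s : Finset ι}
    {q c : ι → ℤ} (hq : (s : Set ι).Pairwise (IsCoprime on q))
    (hc : ∀ i ∈ s, c i * ((∏ j ∈ s, q j) / q i) ≡ 1 [ZMOD q i]) (x : ℤ) :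
    exp (2 * π * I * x / ∏ j ∈ s, q j) = ∏ i ∈ s, exp (2 * π * I * (c i * x : ℤ) / q i) := by
  have hq0 : ∀ i ∈ s, q i ≠ 0 := fun i hi h0 => by simpa [h0] using hc i hi
  set n := ∏ j ∈ s, q j
  have hx : x ≡ ∑ i ∈ s, c i * (n / q i) * x [ZMOD n] := by
    simpa [sum_mul] using ((Int.sum_mul_ediv_modEq_one hq hc).mul_right x).symm
  rw [exp_two_pi_I_mul_div_congr hx, ← exp_sum]
  refine congrArg exp ?_
  push_cast
  rw [mul_sum, sum_div]
  refine sum_congr rfl fun i hi => ?_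
  have hn : n = n / q i * q i := (Int.ediv_mul_cancel (dvd_prod_of_mem q hi)).symm
  have hcofactor : n / q i ≠ 0 :=
    left_ne_zero_of_mul (by rw [← hn]; exact prod_ne_zero_iff.2 hq0)
  rw [show (n : ℂ) = (n / q i : ℤ) * q i by exact_mod_cast hn]
  field_simp [hq0 i hi, hcofactor]

theorem Nat.prod_pow_factorization_of_primeFactors_subset {n : ℕ} (hn : n ≠ 0) {P : Finset ℕ}
    (hnP : n.primeFactors ⊆ P) : ∏ p ∈ P, ordProj[p] n = n :=
  (Finsupp.prod_of_support_subset _ (by simpa using hnP) _ fun _ _ => pow_zero _).symm.trans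
    (Nat.prod_factorization_pow_eq_self hn)

theorem Nat.pairwise_coprime_pow_of_prime {P : Finset ℕ} (hP : ∀ p ∈ P, p.Prime) (e : ℕ → ℕ) :
    (P : Set ℕ).Pairwise (Nat.Coprime on fun p => p ^ e p) :=
  fun p hp q hq hpq => Nat.Coprime.pow _ _ ((Nat.coprime_primes (hP p hp) (hP q hq)).2 hpq)

theorem Nat.ordProj_mul_sq {k f : ℕ} (hk : k ≠ 0) (hf : f ≠ 0) (p : ℕ) :
    ordProj[p] k * ordProj[p] f ^ 2 = ordProj[p] (k * f ^ 2) := by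
  rw [Nat.factorization_mul hk (pow_ne_zero 2 hf), Nat.factorization_pow]
  simp [pow_add, pow_mul']

theorem Nat.primeFactors_mul_sq {k f : ℕ} (hk : k ≠ 0) (hf : f ≠ 0) :
    (k * f ^ 2).primeFactors = (k * f).primeFactors := by
  rw [Nat.primeFactors_mul hk (pow_ne_zero 2 hf), Nat.primeFactors_mul hk hf,
    Nat.primeFactors_pow f two_ne_zero]

theorem Int.natCast_dvd_iff_forall_ordProj_dvd {n : ℕ} (hn : n ≠ 0) {P : Finset ℕ}
    (hP : ∀ p ∈ P, p.Prime) (hnP : n.primeFactors ⊆ P) {D : ℤ} :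
    (n : ℤ) ∣ D ↔ ∀ p ∈ P, ((ordProj[p] n : ℕ) : ℤ) ∣ D := by
  refine ⟨fun h p _ => (Int.natCast_dvd_natCast.2 (Nat.ordProj_dvd n p)).trans h, fun h => ?_⟩
  rw [← Nat.prod_pow_factorization_of_primeFactors_subset hn hnP, Nat.cast_prod]
  exact prod_dvd_of_coprime (fun p hp q hq hpq =>
    Nat.isCoprime_iff_coprime.2 (Nat.pairwise_coprime_pow_of_prime hP _ hp hq hpq)) h

theorem jacobiSym_prod_right (a : ℤ) (s : Finset ℕ) (g : ℕ → ℕ) (hg : ∀ i ∈ s, g i ≠ 0) :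
    jacobiSym a (∏ i ∈ s, g i) = ∏ i ∈ s, jacobiSym a (g i) := by
  rw [← prod_map_toList, jacobiSym.list_prod_right (by simpa using hg), List.map_map,
    prod_map_toList]
  rfl

theorem jacobiSym_div_sq_ordProj {f p : ℕ} (hf : f ≠ 0) (hp : p.Prime) (b : ℕ) {D : ℤ}
    (hD : (f : ℤ) ^ 2 ∣ D) :
    jacobiSym (D / ((ordProj[p] f : ℕ) : ℤ) ^ 2) (p ^ b) = jacobiSym (D / (f : ℤ) ^ 2) (p ^ b) := by
  obtain ⟨Q, rfl⟩ := hD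
  have hsplit : (f : ℤ) = (ordProj[p] f : ℕ) * (ordCompl[p] f : ℕ) := by
    exact_mod_cast (Nat.ordProj_mul_ordCompl_eq_self f p).symm
  have hcop : Int.gcd (ordCompl[p] f : ℕ) (p ^ b : ℕ) = 1 := by
    rw [Int.gcd_natCast_natCast]
    exact Nat.Coprime.pow_right b (Nat.coprime_ordCompl hp hf).symm
  rw [Int.mul_ediv_cancel_left _ (by positivity), hsplit,
    show ((ordProj[p] f : ℕ) * (ordCompl[p] f : ℕ) : ℤ) ^ 2 * Q
      = ((ordProj[p] f : ℕ) : ℤ) ^ 2 * (((ordCompl[p] f : ℕ) : ℤ) ^ 2 * Q) by ring,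
    Int.mul_ediv_cancel_left _ (pow_ne_zero 2 (by simp [hp.ne_zero])), jacobiSym.mul_left,
    jacobiSym.sq_one' hcop, one_mul]

noncomputable def klTerm (k f : ℕ) (ξ m : ℤ) (a : ℕ) : ℂ :=
  if (f : ℤ) ^ 2 ∣ (a : ℤ) ^ 2 - 4 * m then
    (jacobiSym (((a : ℤ) ^ 2 - 4 * m) / (f : ℤ) ^ 2) k : ℂ) *
      exp (2 * π * I * (a * ξ : ℤ) / (k * f ^ 2 : ℤ))
  else 0

theorem Kl_eq_sum_klTerm (k f : ℕ) (ξ m : ℤ) :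
    Kl k f ξ m = ∑ a ∈ range (k * f ^ 2), klTerm k f ξ m a := by
  refine sum_congr rfl fun a _ => ?_
  unfold klTerm
  push_cast
  ring_nf

theorem klTerm_periodic (k f : ℕ) (ξ m : ℤ) : Periodic (klTerm k f ξ m) (k * f ^ 2) := by
  intro a
  rcases eq_or_ne f 0 with rfl | hf
  · simp
  have hD : ((a + k * f ^ 2 : ℕ) : ℤ) ^ 2 - 4 * m
      = (a : ℤ) ^ 2 - 4 * m + (f : ℤ) ^ 2 * (k * (2 * a + k * f ^ 2)) := by
    push_cast; ring
  simp only [klTerm, hD, dvd_add_left (dvd_mul_right _ _)]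
  split_ifs with hdvd
  · rw [Int.add_mul_ediv_left _ _ (by positivity),
      jacobiSym.mod_left' (Int.add_mul_emod_self_left _ _ _),
      exp_two_pi_I_mul_div_congr (y := a * ξ) (Int.modEq_iff_dvd.2 ⟨-ξ, by push_cast; ring⟩)]
  · rfl

theorem exp_two_pi_I_mul_div_eq_prod_ordProj {k f : ℕ} (hk : k ≠ 0) (hf : f ≠ 0) {c : ℕ → ℤ}
    (hc : ∀ ℓ ∈ (k * f).primeFactors,
      Int.ModEq ((ℓ : ℤ) ^ ((k * f ^ 2).factorization ℓ))
        (c ℓ * ((k * f ^ 2 : ℤ) / (ℓ : ℤ) ^ ((k * f ^ 2).factorization ℓ))) 1)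
    (x : ℤ) :
    exp (2 * π * I * x / (k * f ^ 2 : ℤ)) = ∏ ℓ ∈ (k * f).primeFactors,
      exp (2 * π * I * (c ℓ * x : ℤ) / ((ordProj[ℓ] k : ℕ) * (ordProj[ℓ] f : ℕ) ^ 2 : ℤ)) := by
  have hP : ∀ ℓ ∈ (k * f).primeFactors, ℓ.Prime := fun ℓ => Nat.prime_of_mem_primeFactors
  have hprod : ∏ ℓ ∈ (k * f).primeFactors, (ℓ : ℤ) ^ (k * f ^ 2).factorization ℓ
      = k * f ^ 2 := by
    exact_mod_cast Nat.prod_pow_factorization_of_primeFactors_subset (by positivity)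
      (Nat.primeFactors_mul_sq hk hf).le
  have hcop : ((k * f).primeFactors : Set ℕ).Pairwise
      (IsCoprime on fun ℓ => (ℓ : ℤ) ^ (k * f ^ 2).factorization ℓ) := fun p hp q hq hpq => by
    simpa only [onFun, Nat.cast_pow] using
      Nat.isCoprime_iff_coprime.2 (Nat.pairwise_coprime_pow_of_prime hP _ hp hq hpq)
  rw [← hprod, exp_two_pi_I_mul_div_prod hcop (by rwa [hprod])]
  refine prod_congr rfl fun ℓ _ => ?_
  congr 3
  exact_mod_cast Nat.ordProj_mul_sq hk hf ℓ |>.symm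

theorem klTerm_eq_prod {k f : ℕ} (hk : k ≠ 0) (hf : f ≠ 0) (ξ m : ℤ) {c : ℕ → ℤ}
    (hc : ∀ ℓ ∈ (k * f).primeFactors,
      Int.ModEq ((ℓ : ℤ) ^ ((k * f ^ 2).factorization ℓ))
        (c ℓ * ((k * f ^ 2 : ℤ) / (ℓ : ℤ) ^ ((k * f ^ 2).factorization ℓ))) 1)
    (a : ℕ) :
    klTerm k f ξ m a = ∏ ℓ ∈ (k * f).primeFactors,
      klTerm (ordProj[ℓ] k) (ordProj[ℓ] f) (c ℓ * ξ) m a := by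
  set P := (k * f).primeFactors
  have hP : ∀ ℓ ∈ P, ℓ.Prime := fun ℓ => Nat.prime_of_mem_primeFactors
  have hfP : (f ^ 2).primeFactors ⊆ P := by
    rw [Nat.primeFactors_pow f two_ne_zero]
    exact Nat.primeFactors_mono (dvd_mul_left f k) (mul_ne_zero hk hf)
  have hdvd_iff : (f : ℤ) ^ 2 ∣ (a : ℤ) ^ 2 - 4 * m
      ↔ ∀ ℓ ∈ P, ((ordProj[ℓ] f : ℕ) : ℤ) ^ 2 ∣ (a : ℤ) ^ 2 - 4 * m := by
    simpa [Nat.factorization_pow, pow_mul'] using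
      Int.natCast_dvd_iff_forall_ordProj_dvd (pow_ne_zero 2 hf) hP hfP
  by_cases hD : (f : ℤ) ^ 2 ∣ (a : ℤ) ^ 2 - 4 * m
  · have hk' : ∏ ℓ ∈ P, ordProj[ℓ] k = k := Nat.prod_pow_factorization_of_primeFactors_subset hk
      (Nat.primeFactors_mono (dvd_mul_right k f) (mul_ne_zero hk hf))
    rw [klTerm, if_pos hD, prod_congr rfl fun ℓ hℓ => by
        rw [klTerm, if_pos ((hdvd_iff.1 hD) ℓ hℓ), jacobiSym_div_sq_ordProj hf (hP ℓ hℓ) _ hD,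
          mul_left_comm],
      prod_mul_distrib, ← Int.cast_prod,
      ← jacobiSym_prod_right _ _ _ fun ℓ hℓ => pow_ne_zero _ (hP ℓ hℓ).ne_zero, hk',
      exp_two_pi_I_mul_div_eq_prod_ordProj hk hf hc]
  · obtain ⟨ℓ, hℓ, hnd⟩ : ∃ ℓ ∈ P, ¬((ordProj[ℓ] f : ℕ) : ℤ) ^ 2 ∣ (a : ℤ) ^ 2 - 4 * m := by
      simpa using mt hdvd_iff.2 hD
    rw [klTerm, if_neg hD]
    exact (prod_eq_zero hℓ (if_neg hnd)).symm

theorem stmt4_general (k f : ℕ) (hk : 0 < k) (hf : 0 < f)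
    (ξ m : ℤ) (c : ℕ → ℤ)
    (hc : ∀ ℓ ∈ (k * f).primeFactors,
      Int.ModEq ((ℓ : ℤ) ^ ((k * f ^ 2).factorization ℓ))
        (c ℓ * ((k * f ^ 2 : ℤ) / (ℓ : ℤ) ^ ((k * f ^ 2).factorization ℓ))) 1) :
    Kl k f ξ m = ∏ ℓ ∈ (k * f).primeFactors,
      Kl (ℓ ^ (k.factorization ℓ)) (ℓ ^ (f.factorization ℓ)) (c ℓ * ξ) m := by
  have hP : ∀ ℓ ∈ (k * f).primeFactors, ℓ.Prime := fun ℓ => Nat.prime_of_mem_primeFactors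
  have hmoduli : ∏ ℓ ∈ (k * f).primeFactors, ordProj[ℓ] k * ordProj[ℓ] f ^ 2 = k * f ^ 2 := by
    simp_rw [Nat.ordProj_mul_sq hk.ne' hf.ne']
    exact Nat.prod_pow_factorization_of_primeFactors_subset (by positivity)
      (Nat.primeFactors_mul_sq hk.ne' hf.ne').le
  have hcop : ((k * f).primeFactors : Set ℕ).Pairwise
      (Nat.Coprime on fun ℓ => ordProj[ℓ] k * ordProj[ℓ] f ^ 2) := by
    simpa only [Nat.ordProj_mul_sq hk.ne' hf.ne'] using Nat.pairwise_coprime_pow_of_prime hP _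
  calc Kl k f ξ m
      = ∑ a ∈ range (∏ ℓ ∈ (k * f).primeFactors, ordProj[ℓ] k * ordProj[ℓ] f ^ 2),
          ∏ ℓ ∈ (k * f).primeFactors, klTerm (ordProj[ℓ] k) (ordProj[ℓ] f) (c ℓ * ξ) m a := by
        rw [Kl_eq_sum_klTerm, hmoduli]
        exact sum_congr rfl fun a _ => klTerm_eq_prod hk.ne' hf.ne' ξ m hc a
    _ = _ := by
        rw [sum_range_prod_eq_prod_sum_range hcop fun ℓ _ => klTerm_periodic _ _ _ _]
        simp only [Kl_eq_sum_klTerm]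

/-- Factorization of the generalized Kloosterman sum into local ones: for odd
positive `k, f`, if for each prime `ℓ ∣ kf` the integer `c ℓ` is an inverse of
`(kf²)·ℓ^{-v_ℓ(kf²)}` modulo `ℓ^{v_ℓ(kf²)}`, then `Kl_{k,f}(ξ,m)` is the
product over `ℓ ∣ kf` of `Kl^{(ℓ)}_{k_{(ℓ)},f_{(ℓ)}}(c_ℓ·ξ, m)`. -/
theorem stmt4 (k f : ℕ) (hk : 0 < k) (hf : 0 < f) (hkodd : Odd k) (hfodd : Odd f)
    (ξ m : ℤ) (c : ℕ → ℤ)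
    (hc : ∀ ℓ ∈ (k * f).primeFactors,
      Int.ModEq ((ℓ : ℤ) ^ ((k * f ^ 2).factorization ℓ))
        (c ℓ * ((k * f ^ 2 : ℤ) / (ℓ : ℤ) ^ ((k * f ^ 2).factorization ℓ))) 1) :
    Kl k f ξ m = ∏ ℓ ∈ (k * f).primeFactors,
      Kl (ℓ ^ (k.factorization ℓ)) (ℓ ^ (f.factorization ℓ)) (c ℓ * ξ) m :=
  stmt4_general k f hk hf ξ m c hc
end

section
/- Let M > 1 and 0 < ε < M − 1. There is a constant C > 0, depending only on M, ε and q₁,…,q_r, such that for every real a > 0 the family (⟦a⋆ξ⟧^{−M})_{ξ ∈ ℤ^S∖{0}} is summable and ∑_{ξ ∈ ℤ^S∖{0}} ⟦a⋆ξ⟧^{−M} ≤ C·a^{−M+ε}. -/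
/-- `x ∈ ℤ^S`: the only primes allowed in the denominator of `x` are those of
`Q` (for `S = {∞} ∪ Q`). -/
def IsSInt (Q : Finset ℕ) (x : ℚ) : Prop :=
  ∀ p : ℕ, p.Prime → p ∣ x.den → p ∈ Q

/-- The height `⟦a⋆ξ⟧ = (1+|a·ξ|)·∏_{q ∈ Q}(1+|ξ|_q)`, where
`|ξ|_q = q^{-v_q(ξ)}`. -/
noncomputable def ht (Q : Finset ℕ) (a : ℝ) (ξ : ℚ) : ℝ :=
  (1 + |a * (ξ : ℝ)|) * ∏ q ∈ Q, (1 + (q : ℝ) ^ (-(padicValRat q ξ)))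

/-!
Writing `ξ = n / d` in lowest terms, the `q`-adic factors of `⟦a⋆ξ⟧` together are at least `d`,
since `|ξ|_q = q^{v_q(d)}` for every `q ∣ d`. Hence, as `ξ ↦ (n, d)` is injective,
`⟦a⋆ξ⟧^{-M} ≤ (a|n|/d)^{-M+ε} d^{-M} = a^{-M+ε} |n|^{-M+ε} d^{-ε}`, and the sum of the right-hand
side over all `n ∈ ℤ` and all `Q`-smooth `d` converges: over `n` because `M - ε > 1`, over `d` by
the Euler product `∏_{q ∈ Q} (1 - q^{-ε})⁻¹`.
-/

open Finset

lemma IsSInt.den_mem_factoredNumbers {Q : Finset ℕ} {ξ : ℚ} (h : IsSInt Q ξ) :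
    ξ.den ∈ Nat.factoredNumbers Q :=
  Nat.mem_factoredNumbers'.mpr h

lemma padicValRat_eq_neg_factorization_den {q : ℕ} (hq : q.Prime) {ξ : ℚ} (h : q ∣ ξ.den) :
    padicValRat q ξ = -(ξ.den.factorization q : ℤ) := by
  have hnum : ¬ (q : ℤ) ∣ ξ.num := fun hn =>
    hq.ne_one (Nat.dvd_one.mp (ξ.reduced ▸ Nat.dvd_gcd (Int.natCast_dvd.mp hn) h))
  rw [padicValRat_def, padicValInt.eq_zero_of_not_dvd hnum, Nat.factorization_def _ hq]
  ring

lemma pow_factorization_den_le_one_add_zpow (q : ℕ) (ξ : ℚ) :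
    (q : ℝ) ^ ξ.den.factorization q ≤ 1 + (q : ℝ) ^ (-padicValRat q ξ) := by
  rcases Nat.eq_zero_or_pos (ξ.den.factorization q) with h | h
  · rw [h, pow_zero]
    linarith [show (0 : ℝ) ≤ (q : ℝ) ^ (-padicValRat q ξ) by positivity]
  · rw [padicValRat_eq_neg_factorization_den (Nat.prime_of_mem_primeFactors
      (Nat.support_factorization _ ▸ Finsupp.mem_support_iff.mpr h.ne'))
      (Nat.dvd_of_factorization_pos h.ne'), neg_neg, zpow_natCast]
    linarith

lemma IsSInt.den_le_prod_one_add_zpow {Q : Finset ℕ} {ξ : ℚ} (h : IsSInt Q ξ) :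
    (ξ.den : ℝ) ≤ ∏ q ∈ Q, (1 + (q : ℝ) ^ (-padicValRat q ξ)) := by
  have hden : ξ.den = ∏ q ∈ Q, q ^ ξ.den.factorization q := by
    conv_lhs => rw [← Nat.prod_factorization_pow_eq_self ξ.den_nz]
    refine Finsupp.prod_of_support_subset _ (fun p hp => ?_) _ fun q _ => pow_zero q
    rw [Nat.support_factorization, Nat.mem_primeFactors] at hp
    exact h p hp.1 hp.2.1
  rw [hden, Nat.cast_prod]
  push_cast
  exact prod_le_prod (fun q _ => by positivity) fun q _ => pow_factorization_den_le_one_add_zpow q ξ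

lemma ht_nonneg (Q : Finset ℕ) (a : ℝ) (ξ : ℚ) : 0 ≤ ht Q a ξ := by
  unfold ht
  positivity

lemma one_add_abs_mul_den_le_ht {Q : Finset ℕ} {ξ : ℚ} (h : IsSInt Q ξ) (a : ℝ) :
    (1 + |a * (ξ : ℝ)|) * ξ.den ≤ ht Q a ξ :=
  mul_le_mul_of_nonneg_left h.den_le_prod_one_add_zpow (by positivity)

lemma Real.one_add_rpow_neg_le_rpow {x M ε : ℝ} (hx : 0 < x) (hε : 0 ≤ ε) (hεM : ε ≤ M) :
    (1 + x) ^ (-M) ≤ x ^ (-M + ε) :=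
  calc (1 + x) ^ (-M) ≤ (1 + x) ^ (-M + ε) :=
        Real.rpow_le_rpow_of_exponent_le (by linarith) (by linarith)
    _ ≤ x ^ (-M + ε) := Real.rpow_le_rpow_of_nonpos hx (by linarith) (by linarith)

lemma ht_rpow_neg_le {Q : Finset ℕ} {ξ : ℚ} (hS : IsSInt Q ξ) (h0 : ξ ≠ 0) {a M ε : ℝ}
    (ha : 0 < a) (hε : 0 ≤ ε) (hεM : ε ≤ M) :
    ht Q a ξ ^ (-M) ≤ a ^ (-M + ε) * (|(ξ.num : ℝ)| ^ (-M + ε) * (ξ.den : ℝ) ^ (-ε)) := by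
  set x := |a * (ξ : ℝ)|
  have hx : 0 < x := by positivity
  have hd : (0 : ℝ) < ξ.den := by exact_mod_cast ξ.den_pos
  have hxd : x * ξ.den = a * |(ξ.num : ℝ)| := by
    have hnum : (ξ : ℝ) * ξ.den = ξ.num := by exact_mod_cast Rat.mul_den_eq_num ξ
    rw [← abs_of_pos hd, ← abs_mul, mul_assoc, hnum, abs_mul, abs_of_pos ha]
  calc ht Q a ξ ^ (-M) ≤ ((1 + x) * ξ.den) ^ (-M) :=
        Real.rpow_le_rpow_of_nonpos (by positivity) (one_add_abs_mul_den_le_ht hS a) (by linarith)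
    _ = (1 + x) ^ (-M) * (ξ.den : ℝ) ^ (-M) := Real.mul_rpow (by positivity) hd.le
    _ ≤ x ^ (-M + ε) * (ξ.den : ℝ) ^ (-M) := by
        gcongr
        exact Real.one_add_rpow_neg_le_rpow hx hε hεM
    _ = (x * ξ.den) ^ (-M + ε) * (ξ.den : ℝ) ^ (-ε) := by
        rw [Real.mul_rpow hx.le hd.le, mul_assoc, ← Real.rpow_add hd]
        ring_nf
    _ = a ^ (-M + ε) * (|(ξ.num : ℝ)| ^ (-M + ε) * (ξ.den : ℝ) ^ (-ε)) := by
        rw [hxd, Real.mul_rpow ha.le (abs_nonneg _), mul_assoc]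

lemma Nat.summable_factoredNumbers_rpow_neg (s : Finset ℕ) {ε : ℝ} (hε : 0 < ε) :
    Summable fun m : Nat.factoredNumbers s => ((m : ℕ) : ℝ) ^ (-ε) := by
  let f : ℕ →* ℝ :=
    { toFun := fun m => (m : ℝ) ^ (-ε)
      map_one' := by simp
      map_mul' := fun m n => by push_cast; exact Real.mul_rpow m.cast_nonneg n.cast_nonneg }
  have hf : ∀ {p : ℕ}, p.Prime → ‖f p‖ < 1 := fun {p} hp => by
    show ‖(p : ℝ) ^ (-ε)‖ < 1
    rw [Real.norm_of_nonneg (Real.rpow_nonneg p.cast_nonneg _)]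
    exact Real.rpow_lt_one_of_one_lt_of_neg (by exact_mod_cast hp.one_lt) (by linarith)
  refine (EulerProduct.summable_and_hasSum_factoredNumbers_prod_filter_prime_geometric hf s).1.congr
    fun m => Real.norm_of_nonneg (Real.rpow_nonneg (m : ℕ).cast_nonneg _)

lemma summable_and_tsum_le_of_le_mul_comp_injective {α β : Type*} {f : α → ℝ} {g : β → ℝ}
    {φ : α → β} (hφ : φ.Injective) (hg : Summable g) (hg0 : 0 ≤ g) (hf0 : 0 ≤ f) {c : ℝ}
    (hc : 0 ≤ c) (hfg : ∀ x, f x ≤ c * g (φ x)) :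
    Summable f ∧ ∑' x, f x ≤ c * ∑' y, g y := by
  have hgφ : Summable fun x => c * g (φ x) := (hg.comp_injective hφ).mul_left c
  refine ⟨hgφ.of_nonneg_of_le hf0 hfg, ?_⟩
  calc ∑' x, f x ≤ ∑' x, c * g (φ x) := (hgφ.of_nonneg_of_le hf0 hfg).tsum_le_tsum hfg hgφ
    _ = c * ∑' x, g (φ x) := tsum_mul_left
    _ ≤ c * ∑' y, g y := by gcongr; exact tsum_comp_le_tsum_of_inj hg hg0 hφ

theorem stmt9_general (Q : Finset ℕ) (M ε : ℝ)
    (hε : 0 < ε) (hεM : ε < M - 1) :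
    ∃ C > (0 : ℝ), ∀ a : ℝ, 0 < a →
      Summable (fun ξ : {ξ : ℚ // IsSInt Q ξ ∧ ξ ≠ 0} => ht Q a ξ.1 ^ (-M)) ∧
      ∑' ξ : {ξ : ℚ // IsSInt Q ξ ∧ ξ ≠ 0}, ht Q a ξ.1 ^ (-M) ≤ C * a ^ (-M + ε) := by
  let φ : {ξ : ℚ // IsSInt Q ξ ∧ ξ ≠ 0} → ℤ × Nat.factoredNumbers Q :=
    fun ξ => (ξ.1.num, ⟨ξ.1.den, ξ.2.1.den_mem_factoredNumbers⟩)
  have hφ : φ.Injective := fun ξ η h =>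
    Subtype.ext (Rat.ext (congrArg Prod.fst h) (congrArg (fun p => (p.2 : ℕ)) h))
  let g : ℤ × Nat.factoredNumbers Q → ℝ := fun p => |(p.1 : ℝ)| ^ (-M + ε) * ((p.2 : ℕ) : ℝ) ^ (-ε)
  have hg0 : 0 ≤ g := fun p => by positivity
  have hnum : Summable fun n : ℤ => |(n : ℝ)| ^ (-M + ε) := by
    have h := Real.summable_abs_int_rpow (b := M - ε) (by linarith)
    rwa [neg_sub, sub_eq_neg_add] at h
  have hg : Summable g :=
    hnum.mul_of_nonneg (Nat.summable_factoredNumbers_rpow_neg Q hε) (fun n => by positivity)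
      fun m => by positivity
  have h1 : 1 ∈ Nat.factoredNumbers Q :=
    Nat.mem_factoredNumbers_of_primeFactors_subset one_ne_zero (by simp)
  refine ⟨∑' p, g p, hg.tsum_pos hg0 (1, ⟨1, h1⟩) (by positivity), fun a ha => ?_⟩
  rw [mul_comm]
  exact summable_and_tsum_le_of_le_mul_comp_injective hφ hg hg0
    (fun ξ => Real.rpow_nonneg (ht_nonneg Q a ξ) _) (by positivity)
    fun ξ => ht_rpow_neg_le ξ.2.1 ξ.2.2 ha hε.le (by linarith)

/-- For `M > 1` and `0 < ε < M - 1` there is `C > 0` (depending only on `M`,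
`ε` and `Q`) such that for every `a > 0` the family `(⟦a⋆ξ⟧^{-M})_{ξ ∈ ℤ^S∖{0}}`
is summable with sum at most `C·a^{-M+ε}`. -/
theorem stmt9 (Q : Finset ℕ) (hQ : ∀ q ∈ Q, q.Prime) (M ε : ℝ)
    (hM : 1 < M) (hε : 0 < ε) (hεM : ε < M - 1) :
    ∃ C > (0 : ℝ), ∀ a : ℝ, 0 < a →
      Summable (fun ξ : {ξ : ℚ // IsSInt Q ξ ∧ ξ ≠ 0} => ht Q a ξ.1 ^ (-M)) ∧
      ∑' ξ : {ξ : ℚ // IsSInt Q ξ ∧ ξ ≠ 0}, ht Q a ξ.1 ^ (-M) ≤ C * a ^ (-M + ε) :=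
  stmt9_general Q M ε hε hεM
end
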